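/- Let H, e_1, …, e_M be n×n Hermitian complex matrices, let U_1, …, U_r be n×n unitary complex matrices, let α_1, …, α_M ≥ 0, β ≥ 0 and p_1, …, p_r ≥ 0 be nonnegative reals, set V := Σ_j α_j e_j² + β (Σ_k p_k)·I, and define the random unitary GKLS generator L(ρ) := −i(Hρ − ρH) − (1/2)(Vρ + ρV) + Σ_j α_j e_j ρ e_j + β Σ_k p_k U_k ρ U_kᴴ. Then for every n×n Hermitian matrix ρ one has Tr(L(ρ)·ρ) ≤ 0, i.e. the purity F(ρ) = Tr(ρ²)/2 is a LaSalle function for every quantum random unitary semigroup. -/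

import Mathlib

open Matrix
open scoped ComplexOrder

/-!
Write `L = -i[H, ·] + Σ_j α_j D_{e_j} + β Σ_k p_k D_{U_k}` with the Lindblad dissipator
`D_A(ρ) = AρAᴴ - ½(AᴴAρ + ρAᴴA)`. The Hamiltonian part is trace-orthogonal to `ρ` by
cyclicity of the trace, and for a normal `A` (Hermitian and unitary matrices are normal)
cyclicity gives `Tr(D_A(ρ) ρ) = -½ Tr([A, ρ]ᴴ [A, ρ]) ≤ 0`.
-/

theorem trace_commutator_mul_self {m R : Type*} [Fintype m] [CommRing R] (H ρ : Matrix m m R) :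
    trace ((H * ρ - ρ * H) * ρ) = 0 := by
  rw [sub_mul, trace_sub, Matrix.mul_assoc, Matrix.mul_assoc, trace_mul_comm ρ, Matrix.mul_assoc,
    sub_self]

section Dissipator

variable {m 𝕜 : Type*} [Fintype m] [RCLike 𝕜]

def lindbladDissipator (A ρ : Matrix m m 𝕜) : Matrix m m 𝕜 :=
  A * ρ * Aᴴ - (1 / 2 : 𝕜) • (Aᴴ * A * ρ + ρ * (Aᴴ * A))

theorem lindbladDissipator_of_isHermitian {A : Matrix m m 𝕜} (hA : A.IsHermitian)
    (ρ : Matrix m m 𝕜) :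
    lindbladDissipator A ρ = A * ρ * A - (1 / 2 : 𝕜) • (A * A * ρ + ρ * (A * A)) := by
  rw [lindbladDissipator, hA.eq]

theorem lindbladDissipator_of_unitary [DecidableEq m] {U : Matrix m m 𝕜} (hU : Uᴴ * U = 1)
    (ρ : Matrix m m 𝕜) :
    lindbladDissipator U ρ = U * ρ * Uᴴ - ρ := by
  rw [lindbladDissipator, hU, Matrix.one_mul, Matrix.mul_one, ← two_smul 𝕜 ρ, smul_smul]
  norm_num

theorem trace_lindbladDissipator_mul_self {A ρ : Matrix m m 𝕜} (hA : Aᴴ * A = A * Aᴴ)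
    (hρ : ρ.IsHermitian) :
    trace (lindbladDissipator A ρ * ρ) =
      -(1 / 2) * trace ((A * ρ - ρ * A)ᴴ * (A * ρ - ρ * A)) := by
  rw [conjTranspose_sub, conjTranspose_mul, conjTranspose_mul, hρ.eq, lindbladDissipator]
  have cyc₁ : trace (Aᴴ * (ρ * (A * ρ))) = trace (A * (ρ * (Aᴴ * ρ))) := by
    rw [← Matrix.mul_assoc, trace_mul_comm]; simp only [Matrix.mul_assoc]
  have cyc₂ : trace (ρ * (Aᴴ * (ρ * A))) = trace (A * (ρ * (Aᴴ * ρ))) := by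
    rw [trace_mul_comm]; simp only [Matrix.mul_assoc]; exact cyc₁
  have normal : trace (Aᴴ * (ρ * (ρ * A))) = trace (Aᴴ * (A * (ρ * ρ))) := by
    rw [trace_mul_comm]; simp only [Matrix.mul_assoc]
    rw [← hA, ← Matrix.mul_assoc, trace_mul_comm, Matrix.mul_assoc]
  simp only [sub_mul, mul_sub, add_mul, smul_mul, trace_sub, trace_add, trace_smul,
    Matrix.mul_assoc, smul_eq_mul]
  linear_combination (-1 / 2 : 𝕜) * cyc₂ - (1 / 2 : 𝕜) * cyc₁ + (1 / 2 : 𝕜) * normal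

theorem trace_lindbladDissipator_mul_self_nonpos {A ρ : Matrix m m 𝕜} (hA : Aᴴ * A = A * Aᴴ)
    (hρ : ρ.IsHermitian) : trace (lindbladDissipator A ρ * ρ) ≤ 0 := by
  rw [trace_lindbladDissipator_mul_self hA hρ, neg_mul, neg_nonpos]
  exact mul_nonneg (by positivity) (posSemidef_conjTranspose_mul_self _).trace_nonneg

theorem trace_sum_smul_lindbladDissipator_mul_self_nonpos {ι : Type*} (s : Finset ι)
    {c : ι → 𝕜} (hc : ∀ i, 0 ≤ c i) {A : ι → Matrix m m 𝕜}
    (hA : ∀ i, (A i)ᴴ * A i = A i * (A i)ᴴ)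
    {ρ : Matrix m m 𝕜} (hρ : ρ.IsHermitian) :
    trace ((∑ i ∈ s, c i • lindbladDissipator (A i) ρ) * ρ) ≤ 0 := by
  simp only [Finset.sum_mul, trace_sum, smul_mul, trace_smul, smul_eq_mul]
  exact Finset.sum_nonpos fun i _ ↦
    mul_nonpos_of_nonneg_of_nonpos (hc i) (trace_lindbladDissipator_mul_self_nonpos (hA i) hρ)

end Dissipator

theorem purity_lasalle_random_unitary {n M r : ℕ}
    (H : Matrix (Fin n) (Fin n) ℂ)
    (e : Fin M → Matrix (Fin n) (Fin n) ℂ) (he : ∀ j, (e j).IsHermitian)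
    (U : Fin r → Matrix (Fin n) (Fin n) ℂ) (hU : ∀ k, (U k)ᴴ * U k = 1)
    (α : Fin M → ℝ) (hα : ∀ j, 0 ≤ α j)
    (β : ℝ) (hβ : 0 ≤ β)
    (p : Fin r → ℝ) (hp : ∀ k, 0 ≤ p k)
    (V : Matrix (Fin n) (Fin n) ℂ)
    (hV : V = (∑ j, (α j : ℂ) • (e j * e j)) + ((β : ℂ) * (∑ k, (p k : ℂ))) • (1 : Matrix (Fin n) (Fin n) ℂ))
    (L : Matrix (Fin n) (Fin n) ℂ → Matrix (Fin n) (Fin n) ℂ)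
    (hL : ∀ ρ, L ρ = -Complex.I • (H * ρ - ρ * H) - (1 / 2 : ℂ) • (V * ρ + ρ * V)
        + ∑ j, (α j : ℂ) • (e j * ρ * e j)
        + (β : ℂ) • ∑ k, (p k : ℂ) • (U k * ρ * (U k)ᴴ)) :
    ∀ ρ : Matrix (Fin n) (Fin n) ℂ, ρ.IsHermitian →
      Matrix.trace (L ρ * ρ) ≤ 0 := by
  intro ρ hρ
  have gkls : L ρ = -Complex.I • (H * ρ - ρ * H) + ∑ j, (α j : ℂ) • lindbladDissipator (e j) ρ
      + (β : ℂ) • ∑ k, (p k : ℂ) • lindbladDissipator (U k) ρ := by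
    simp only [hL, hV, lindbladDissipator_of_isHermitian (he _),
      lindbladDissipator_of_unitary (hU _), smul_sub, smul_add, Finset.sum_sub_distrib,
      Finset.sum_add_distrib, add_mul, mul_add, Finset.sum_mul, Finset.mul_sum, Matrix.smul_mul,
      Matrix.mul_smul, Matrix.one_mul, Matrix.mul_one, smul_smul, Finset.smul_sum,
      ← Finset.sum_smul]
    ring_nf
    simp only [← Finset.sum_mul]
    module
  have normal_e j : (e j)ᴴ * e j = e j * (e j)ᴴ := by rw [(he j).eq]
  have normal_U k : (U k)ᴴ * U k = U k * (U k)ᴴ := (hU k).trans (mul_eq_one_comm.mp (hU k)).symm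
  rw [gkls, add_mul, add_mul, trace_add, trace_add, smul_mul, trace_smul,
    trace_commutator_mul_self, smul_zero, zero_add, smul_mul, trace_smul, smul_eq_mul]
  exact add_nonpos
    (trace_sum_smul_lindbladDissipator_mul_self_nonpos _ (fun j ↦ Complex.zero_le_real.2 (hα j))
      normal_e hρ)
    (mul_nonpos_of_nonneg_of_nonpos (Complex.zero_le_real.2 hβ)
      (trace_sum_smul_lindbladDissipator_mul_self_nonpos _ (fun k ↦ Complex.zero_le_real.2 (hp k))
        normal_U hρ))
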